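/- Let T be a rooted directed tree of depth h with all leaves at depth h, where each internal vertex v computes a fixed transfer function τ_v of its children, and the root's output f_{h,r} is a Boolean function of the leaf values. Suppose each τ_v has all truth-table entries chosen independently (full independence). For a leaf ℓ with root path v_0 = ℓ, v_1, ..., v_h = r, E_T[Inf_ℓ(f_{h,r})] = prod_{i=1}^{h} E[Inf_{v_{i-1}}(τ_{v_i})], where the expectation is over the random choice of transfer functions. -/

import Mathlib

/-- Rooted directed trees in which all leaves are at depth `h`. -/
inductive BTree : ℕ → Type where
  | leaf : BTree 0
  | node : {h : ℕ} → (d : ℕ) → (Fin d → BTree h) → BTree (h + 1)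

/-- The (index type of the) leaves of a tree. -/
def BTree.Leaves : {h : ℕ} → BTree h → Type
  | _, .leaf => Unit
  | _, .node d c => Σ i : Fin d, (c i).Leaves

def BTree.leavesFintype : {h : ℕ} → (t : BTree h) → Fintype t.Leaves
  | _, .leaf => inferInstanceAs (Fintype Unit)
  | _, .node d c =>
      letI := fun i => (c i).leavesFintype
      inferInstanceAs (Fintype (Σ i : Fin d, (c i).Leaves))

instance instLeavesFintype {h : ℕ} (t : BTree h) : Fintype t.Leaves := t.leavesFintype

def BTree.leavesDecEq : {h : ℕ} → (t : BTree h) → DecidableEq t.Leaves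
  | _, .leaf => inferInstanceAs (DecidableEq Unit)
  | _, .node d c =>
      letI := fun i => (c i).leavesDecEq
      inferInstanceAs (DecidableEq (Σ i : Fin d, (c i).Leaves))

instance instLeavesDecEq {h : ℕ} (t : BTree h) : DecidableEq t.Leaves := t.leavesDecEq

/-- An assignment of a transfer function to every internal vertex of the tree:
a vertex with `d` children gets a function `(Fin d → Bool) → Bool` of its children. -/
def BTree.Labels : {h : ℕ} → BTree h → Type
  | _, .leaf => Unit
  | _, .node d c => ((Fin d → Bool) → Bool) × (∀ i : Fin d, (c i).Labels)

/-- The Boolean function computed at the root: each internal vertex applies its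
transfer function to the values of its children; leaves take the input values. -/
def BTree.eval : {h : ℕ} → (t : BTree h) → t.Labels → (t.Leaves → Bool) → Bool
  | _, .leaf, _, x => x ()
  | _, .node d c, L, x =>
      L.1 fun i => (c i).eval (L.2 i) fun ℓ => x ⟨i, ℓ⟩

/-- The influence of coordinate `i` on `f`: `Pr_x[f(x) ≠ f(x^{(i)})]`, `x` uniform. -/
noncomputable def infl {ι : Type*} [Fintype ι] [DecidableEq ι]
    (f : (ι → Bool) → Bool) (i : ι) : ℝ :=
  ((Finset.univ.filter fun x : ι → Bool => f x ≠ f (Function.update x i (!(x i)))).card : ℝ) /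
    2 ^ (Fintype.card ι)

/-- Expectation of a real random variable under a `PMF`. -/
noncomputable def pexp {α : Type*} (p : PMF α) (X : α → ℝ) : ℝ :=
  ∑' a, (p a).toReal * X a

/-- Product of `PMF`s over `Fin d` (independent coordinates). -/
noncomputable def pmfPi : {d : ℕ} → {α : Fin d → Type} → (∀ i, PMF (α i)) → PMF (∀ i, α i)
  | 0, _, _ => PMF.pure (fun i => i.elim0)
  | _ + 1, _, p =>
      (p 0).bind fun a => (pmfPi fun i => p i.succ).map fun g => Fin.cons a g

/-- Independently draw the transfer function of each internal vertex, the function of a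
`d`-ary vertex being drawn from `T d`. -/
noncomputable def labelPMF (T : ∀ d, PMF ((Fin d → Bool) → Bool)) :
    {h : ℕ} → (t : BTree h) → PMF t.Labels
  | _, .leaf => PMF.pure ()
  | _, .node d c =>
      (T d).bind fun f => (pmfPi fun i => labelPMF T (c i)).map fun Ls => (f, Ls)

/-- `pathProd T t ℓ` is `∏_{k=1}^{h} E[infl_{v_{k-1}}(τ_{v_k})]`, the product of the
expected influences along the path `v_0 = ℓ, v_1, …, v_h = root` from the leaf `ℓ`
to the root. -/
noncomputable def pathProd (T : ∀ d, PMF ((Fin d → Bool) → Bool)) :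
    {h : ℕ} → (t : BTree h) → t.Leaves → ℝ
  | _, .leaf, _ => 1
  | _, .node d c, ℓ => pexp (T d) (fun f => infl f ℓ.1) * pathProd T (c ℓ.1) ℓ.2

/-- A fully independent family of transfer functions: every truth-table entry is drawn
i.i.d. from the distribution `μ` on bits. -/
noncomputable def iidFun (μ : PMF Bool) (d : ℕ) : PMF ((Fin d → Bool) → Bool) :=
  (pmfPi fun _ : Fin (Fintype.card (Fin d → Bool)) => μ).map
    fun g x => g (Fintype.equivFin (Fin d → Bool) x)


/-!
Flipping a leaf `ℓ` in the `i`-th subtree changes the root value iff it changes the value `y i`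
of the `i`-th child and the root transfer function `f` is sensitive to coordinate `i` at `y`.
For fixed transfer functions below the root, the second event only asks that the two distinct
truth-table entries `f y` and `f (y with i flipped)` differ, which has probability
`2 μ(false) μ(true)` whatever `y` is. Averaging over `f` therefore multiplies the influence of
`ℓ` on the `i`-th child by `2 μ(false) μ(true)`, which is also the expected influence of any
coordinate of `f`; induction on the depth gives the product formula.
-/

open Finset
open scoped BigOperators

section Expectation

variable {α β : Type*} [Fintype α] [Fintype β]

theorem pexp_eq_sum (p : PMF α) (X : α → ℝ) : pexp p X = ∑ a, (p a).toReal * X a :=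
  tsum_fintype _

theorem PMF.sum_toReal_eq_one (p : PMF α) : ∑ a, (p a).toReal = 1 := by
  have h := p.tsum_coe
  rw [tsum_fintype] at h
  rw [← ENNReal.toReal_sum fun a _ => p.apply_ne_top a, h, ENNReal.toReal_one]

theorem pexp_const (p : PMF α) (c : ℝ) : pexp p (fun _ => c) = c := by
  rw [pexp_eq_sum, ← sum_mul, p.sum_toReal_eq_one, one_mul]

theorem pexp_const_mul (p : PMF α) (c : ℝ) (X : α → ℝ) :
    pexp p (fun a => c * X a) = c * pexp p X := by
  simp only [pexp_eq_sum, mul_sum]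
  exact sum_congr rfl fun a _ => mul_left_comm _ _ _

theorem pexp_pure (a : α) (X : α → ℝ) : pexp (PMF.pure a) X = X a := by
  rw [pexp_eq_sum, Fintype.sum_eq_single a fun b hb => by simp [PMF.pure_apply, hb]]
  simp

theorem pexp_bind (p : PMF α) (q : α → PMF β) (X : β → ℝ) :
    pexp (p.bind q) X = pexp p (fun a => pexp (q a) X) := by
  simp only [pexp_eq_sum, PMF.bind_apply, tsum_fintype, mul_sum]
  rw [sum_comm]
  refine sum_congr rfl fun b _ => ?_
  rw [ENNReal.toReal_sum fun a _ => ENNReal.mul_ne_top (p.apply_ne_top a) ((q a).apply_ne_top b),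
    sum_mul]
  simp only [ENNReal.toReal_mul, mul_assoc]

theorem pexp_map (p : PMF α) (g : α → β) (X : β → ℝ) :
    pexp (p.map g) X = pexp p (X ∘ g) := by
  rw [← PMF.bind_pure_comp, pexp_bind]
  simp only [Function.comp_apply, pexp_pure]
  rfl

theorem pexp_comm (p : PMF α) (q : PMF β) (X : α → β → ℝ) :
    pexp p (fun a => pexp q (X a)) = pexp q (fun b => pexp p (fun a => X a b)) := by
  simp only [pexp_eq_sum, mul_sum]
  rw [sum_comm]
  exact sum_congr rfl fun b _ => sum_congr rfl fun a _ => mul_left_comm _ _ _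

end Expectation

section ProductPMF

variable {d : ℕ} {α : Fin d → Type} [∀ i, Fintype (α i)]

theorem pexp_pmfPi_apply (p : ∀ i, PMF (α i)) (i : Fin d) (X : α i → ℝ) :
    pexp (pmfPi p) (fun g => X (g i)) = pexp (p i) X := by
  induction d with
  | zero => exact i.elim0
  | succ d ih =>
    rw [pmfPi, pexp_bind]
    simp_rw [pexp_map]
    cases i using Fin.cases with
    | zero => simp only [Function.comp_def, Fin.cons_zero, pexp_const]
    | succ i => simp only [Function.comp_def, Fin.cons_succ, ih, pexp_const]

theorem pexp_pmfPi_apply_apply (p : ∀ i, PMF (α i)) {i j : Fin d} (hij : i ≠ j)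
    (X : α i → α j → ℝ) :
    pexp (pmfPi p) (fun g => X (g i) (g j)) = pexp (p i) (fun a => pexp (p j) (X a)) := by
  induction d with
  | zero => exact i.elim0
  | succ d ih =>
    rw [pmfPi, pexp_bind]
    simp_rw [pexp_map]
    cases i using Fin.cases with
    | zero =>
      cases j using Fin.cases with
      | zero => exact absurd rfl hij
      | succ j => simp only [Function.comp_def, Fin.cons_zero, Fin.cons_succ, pexp_pmfPi_apply]
    | succ i =>
      cases j using Fin.cases with
      | zero =>
        simp only [Function.comp_def, Fin.cons_zero, Fin.cons_succ]
        rw [pexp_comm]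
        exact pexp_pmfPi_apply (fun k => p k.succ) i fun v => pexp (p 0) (X v)
      | succ j =>
        simp only [Function.comp_def, Fin.cons_succ,
          ih _ (fun h => hij (congrArg Fin.succ h)), pexp_const]

end ProductPMF

section Influence

variable {ι : Type*} [DecidableEq ι]

theorem self_ne_update_not (x : ι → Bool) (i : ι) : x ≠ Function.update x i (!x i) :=
  fun h => Bool.not_ne_self (x i) (Function.update_eq_self_iff.1 h.symm)

variable [Fintype ι]

theorem infl_eq_expect (f : (ι → Bool) → Bool) (i : ι) :
    infl f i = 𝔼 x, if f x ≠ f (Function.update x i (!x i)) then 1 else 0 := by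
  rw [infl, Fintype.expect_eq_sum_div_card, natCast_card_filter]
  simp

theorem infl_apply_self (i : ι) : infl (fun x : ι → Bool => x i) i = 1 := by
  simp [infl_eq_expect]

theorem pexp_infl {α : Type*} [Fintype α] (p : PMF α) (F : α → (ι → Bool) → Bool) (i : ι) :
    pexp p (fun a => infl (F a) i)
      = 𝔼 x, pexp p (fun a => if F a x ≠ F a (Function.update x i (!x i)) then 1 else 0) := by
  simp only [infl_eq_expect, pexp_eq_sum, mul_expect]
  exact (expect_sum_comm ..).symm

end Influence

section Sigma

variable {κ : Type*} [DecidableEq κ] {β : κ → Type*} [∀ j, DecidableEq (β j)]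

theorem update_sigma_restrict {γ : Type*} (x : (Σ j, β j) → γ) (i : κ) (k : β i) (v : γ)
    (j : κ) : (fun m => Function.update x ⟨i, k⟩ v ⟨j, m⟩)
      = Function.update (fun j m => x ⟨j, m⟩) i (Function.update (fun m => x ⟨i, m⟩) k v) j :=
  congrFun (Sigma.curry_update (γ := fun _ _ => γ) _ _ _) j

theorem comp_update_sigma {γ δ : Type*} (g : ∀ j, (β j → γ) → δ) (x : (Σ j, β j) → γ) (i : κ)
    (k : β i) (v : γ) :
    (fun j => g j fun m => Function.update x ⟨i, k⟩ v ⟨j, m⟩)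
      = Function.update (fun j => g j fun m => x ⟨j, m⟩) i
          (g i fun m => Function.update x ⟨i, k⟩ v ⟨i, m⟩) := by
  funext j
  by_cases hj : j = i
  · subst hj
    rw [Function.update_self]
  · rw [Function.update_of_ne hj, update_sigma_restrict, Function.update_of_ne hj]

variable [Fintype κ] [∀ j, Fintype (β j)]

theorem expect_comp_sigma_restrict {γ : Type*} [Fintype γ] [Nonempty γ] (i : κ)
    (F : (β i → γ) → ℝ) :
    𝔼 x : (Σ j, β j) → γ, F (fun m => x ⟨i, m⟩) = 𝔼 z : β i → γ, F z := by
  rw [Fintype.expect_equiv ((Equiv.piCurry fun _ _ => γ).trans (Equiv.piSplitAt i _))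
    (fun x => F fun m => x ⟨i, m⟩) (fun zr => F zr.1) fun x => rfl, ← univ_product_univ,
    expect_product]
  simp

theorem infl_comp_sigma_restrict (i : κ) (g : (β i → Bool) → Bool) (k : β i) :
    infl (fun x : (Σ j, β j) → Bool => g fun m => x ⟨i, m⟩) ⟨i, k⟩ = infl g k := by
  simp only [infl_eq_expect, update_sigma_restrict _ i k _ i, Function.update_self]
  exact expect_comp_sigma_restrict i fun z => if g z ≠ g (Function.update z k (!z k)) then 1 else 0

end Sigma

section IidFun

variable (μ : PMF Bool) {d : ℕ}

theorem pexp_iidFun_apply_apply {x y : Fin d → Bool} (hxy : x ≠ y) (X : Bool → Bool → ℝ) :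
    pexp (iidFun μ d) (fun f => X (f x) (f y)) = pexp μ (fun u => pexp μ (X u)) := by
  rw [iidFun, pexp_map]
  exact pexp_pmfPi_apply_apply (α := fun _ => Bool) _ ((Fintype.equivFin _).injective.ne hxy) X

theorem pexp_iidFun_ne {x y : Fin d → Bool} (hxy : x ≠ y) :
    pexp (iidFun μ d) (fun f => if f x ≠ f y then 1 else 0)
      = 2 * (μ false).toReal * (μ true).toReal := by
  rw [pexp_iidFun_apply_apply μ hxy fun u v => if u ≠ v then 1 else 0]
  simp only [pexp_eq_sum, Fintype.sum_bool, ne_eq, Bool.false_eq_true, Bool.true_eq_false,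
    not_true_eq_false, not_false_eq_true, if_true, if_false, mul_zero, mul_one, zero_add, add_zero]
  ring

theorem pexp_iidFun_update_ne (y : Fin d → Bool) (i : Fin d) (v : Bool) :
    pexp (iidFun μ d) (fun f => if f y ≠ f (Function.update y i v) then 1 else 0)
      = 2 * (μ false).toReal * (μ true).toReal * if y i ≠ v then 1 else 0 := by
  by_cases h : y i = v
  · simp [← h, pexp_const]
  · obtain rfl : v = !y i := by revert h; cases v <;> cases y i <;> simp
    rw [if_pos h, mul_one]
    exact pexp_iidFun_ne μ (self_ne_update_not y i)

theorem pexp_iidFun_infl (i : Fin d) :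
    pexp (iidFun μ d) (fun f => infl f i) = 2 * (μ false).toReal * (μ true).toReal := by
  simp only [pexp_infl, pexp_iidFun_ne μ (self_ne_update_not _ i), Fintype.expect_const]

theorem pexp_iidFun_infl_comp {β : Fin d → Type*} [∀ j, Fintype (β j)] [∀ j, DecidableEq (β j)]
    (g : ∀ j, (β j → Bool) → Bool) (i : Fin d) (k : β i) :
    pexp (iidFun μ d)
        (fun f => infl (fun x : (Σ j, β j) → Bool => f fun j => g j fun m => x ⟨j, m⟩) ⟨i, k⟩)
      = 2 * (μ false).toReal * (μ true).toReal * infl (g i) k := by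
  rw [pexp_infl, ← infl_comp_sigma_restrict i (g i) k, infl_eq_expect, mul_expect]
  exact expect_congr rfl fun x _ => by rw [comp_update_sigma, pexp_iidFun_update_ne]

end IidFun

instance BTree.instFintypeLabels : {h : ℕ} → (t : BTree h) → Fintype t.Labels
  | _, .leaf => inferInstanceAs (Fintype Unit)
  | _, .node d c =>
      letI := fun i => (c i).instFintypeLabels
      inferInstanceAs (Fintype (((Fin d → Bool) → Bool) × (∀ i : Fin d, (c i).Labels)))

theorem pexp_labelPMF_node (T : ∀ d, PMF ((Fin d → Bool) → Bool)) {h d : ℕ}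
    (c : Fin d → BTree h) (F : (BTree.node d c).Labels → ℝ) :
    pexp (labelPMF T (.node d c)) F
      = pexp (T d) (fun f => pexp (pmfPi fun j => labelPMF T (c j)) (fun Ls => F (f, Ls))) := by
  rw [labelPMF, pexp_bind]
  exact congrArg _ (funext fun f => pexp_map _ _ F)

theorem pexp_iidFun_infl_eval_node (μ : PMF Bool) {h d : ℕ} (c : Fin d → BTree h)
    (Ls : ∀ j, (c j).Labels) (i : Fin d) (k : (c i).Leaves) :
    pexp (iidFun μ d) (fun f => infl (BTree.eval (.node d c) (f, Ls)) ⟨i, k⟩)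
      = 2 * (μ false).toReal * (μ true).toReal * infl ((c i).eval (Ls i)) k :=
  pexp_iidFun_infl_comp μ (fun j => (c j).eval (Ls j)) i k

/-- For a tree of depth `h` whose transfer functions are drawn independently from a
fully independent family (all truth-table entries i.i.d. with distribution `μ`), the
expected influence of a leaf `ℓ` on the root function equals the product, along the
path from `ℓ` to the root, of the expected influences of the corresponding inputs. -/
theorem stmt12 (μ : PMF Bool) {h : ℕ} (t : BTree h) (ℓ : t.Leaves) :
    pexp (labelPMF (iidFun μ) t) (fun L => infl (t.eval L) ℓ)
      = pathProd (iidFun μ) t ℓ := by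
  induction t with
  | leaf => exact (congrArg _ (funext fun _ => infl_apply_self ℓ)).trans (pexp_const _ 1)
  | node d c ih =>
    obtain ⟨i, k⟩ := ℓ
    calc _ = pexp (pmfPi fun j => labelPMF (iidFun μ) (c j))
            (fun Ls => 2 * (μ false).toReal * (μ true).toReal * infl ((c i).eval (Ls i)) k) := by
          rw [pexp_labelPMF_node, pexp_comm]
          simp only [pexp_iidFun_infl_eval_node]
      _ = 2 * (μ false).toReal * (μ true).toReal
            * pexp (labelPMF (iidFun μ) (c i)) (fun L => infl ((c i).eval L) k) := by
          rw [pexp_const_mul]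
          exact congrArg _ (pexp_pmfPi_apply (fun j => labelPMF (iidFun μ) (c j)) i fun L => infl ((c i).eval L) k)
      _ = _ := by rw [ih, ← pexp_iidFun_infl μ i]; rfl
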